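/- arXiv:2507.18247 — 2 statements merged into one kernel-verified Lean document; each statement's English description precedes it below -/
import Mathlib

section
/- Let θ^E > 0 and Ψ(y) = y²/(16 θ^E). For every smooth function u : ℝ² → ℝ on the half-plane {y > 0} decaying to zero sufficiently fast as y → +∞ (together with u e^{Ψ} ∈ L²), there is a constant C depending only on θ^E such that ∫_{ℝ×ℝ_+} |∂_y Ψ(y)|² |u(x,y)|² e^{2Ψ(y)} dx dy ≤ C ∫_{ℝ×ℝ_+} |∂_y u(x,y)|² e^{2Ψ(y)} dx dy. -/
open MeasureTheory

open Set Filter in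

lemma oneD (c : ℝ) (hc : 0 < c) (v : ℝ → ℝ) (hv : Differentiable ℝ v)
    (hv' : Continuous (deriv v))
    (hf : IntegrableOn (fun y => c^2*y^2*(v y)^2*Real.exp (c*y^2)) (Set.Ioi 0))
    (hg : IntegrableOn (fun y => (deriv v y)^2*Real.exp (c*y^2)) (Set.Ioi 0)) :
    ∫ y in Set.Ioi 0, c^2*y^2*(v y)^2*Real.exp (c*y^2)
      ≤ ∫ y in Set.Ioi 0, (deriv v y)^2*Real.exp (c*y^2) := by
  have hvc : Continuous v := hv.continuous
  set f : ℝ → ℝ := fun y => c^2*y^2*(v y)^2*Real.exp (c*y^2) with hfdef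
  set g : ℝ → ℝ := fun y => (deriv v y)^2*Real.exp (c*y^2) with hgdef
  have hfc : Continuous f := by fun_prop
  have hgc : Continuous g := by fun_prop
  set F : ℝ → ℝ := fun y => c*y*(v y)^2*Real.exp (c*y^2) with hFdef
  set D : ℝ → ℝ := fun y => c*(v y)^2*Real.exp (c*y^2)
    + 2*c*y*(v y)*(deriv v y)*Real.exp (c*y^2) + 2*c^2*y^2*(v y)^2*Real.exp (c*y^2) with hDdef
  have hDc : Continuous D := by fun_prop
  have hF : ∀ y : ℝ, HasDerivAt F (D y) y := by
    intro y
    have hv1 : HasDerivAt v (deriv v y) y := (hv y).hasDerivAt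
    have h1 : HasDerivAt (fun y : ℝ => c*y) c y := by
      simpa using (hasDerivAt_id y).const_mul c
    have h2 : HasDerivAt (fun y => (v y)^2) (2*(v y)*(deriv v y)) y := by
      have := hv1.pow 2
      simpa [mul_comm, mul_assoc, mul_left_comm] using (show HasDerivAt (fun y => (v y)^2) _ y from this)
    have h3 : HasDerivAt (fun y : ℝ => Real.exp (c*y^2)) (Real.exp (c*y^2)*(c*(2*y))) y := by
      have h4 : HasDerivAt (fun y : ℝ => c*y^2) (c*(2*y)) y := by
        simpa using (hasDerivAt_pow 2 y).const_mul c
      exact h4.exp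
    have := (show HasDerivAt (fun y => c*y*(v y)^2*Real.exp (c*y^2)) _ y from (h1.mul h2).mul h3)
    convert this using 1
    simp only [hDdef, Pi.mul_apply]; ring
  have hkey : ∀ y : ℝ, f y - g y ≤ D y := by
    intro y
    have h1 : 0 ≤ c*(v y)^2*Real.exp (c*y^2) := by positivity
    have h2 : 0 ≤ (c*y*(v y) + deriv v y)^2 * Real.exp (c*y^2) := by positivity
    have h3 : (c*y*(v y) + deriv v y)^2 * Real.exp (c*y^2)
        = c^2*y^2*(v y)^2*Real.exp (c*y^2) + 2*c*y*(v y)*(deriv v y)*Real.exp (c*y^2)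
          + (deriv v y)^2*Real.exp (c*y^2) := by ring
    simp only [hfdef, hgdef, hDdef]
    linarith
  have hgnn : ∀ y : ℝ, 0 ≤ g y := fun y => by positivity
  have key2 : ∀ b : ℝ, 0 ≤ b → ∫ y in (0:ℝ)..b, f y ≤ F b + ∫ y in Set.Ioi 0, g y := by
    intro b hb
    have hDi : IntervalIntegrable D volume 0 b := hDc.intervalIntegrable 0 b
    have hfi : IntervalIntegrable f volume 0 b := hfc.intervalIntegrable 0 b
    have hgi : IntervalIntegrable g volume 0 b := hgc.intervalIntegrable 0 b
    have hDeq : ∫ y in (0:ℝ)..b, D y = F b - F 0 :=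
      intervalIntegral.integral_eq_sub_of_hasDerivAt (fun y _ => hF y) hDi
    have hF0 : F 0 = 0 := by simp [hFdef]
    have hmono : ∫ y in (0:ℝ)..b, (f y - g y) ≤ ∫ y in (0:ℝ)..b, D y :=
      intervalIntegral.integral_mono_on hb (hfi.sub hgi) hDi (fun y _ => hkey y)
    have hsplit : ∫ y in (0:ℝ)..b, (f y - g y)
        = (∫ y in (0:ℝ)..b, f y) - ∫ y in (0:ℝ)..b, g y :=
      intervalIntegral.integral_sub hfi hgi
    have hgle : ∫ y in (0:ℝ)..b, g y ≤ ∫ y in Set.Ioi 0, g y := by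
      rw [intervalIntegral.integral_of_le hb]
      exact setIntegral_mono_set hg (Filter.Eventually.of_forall hgnn)
        (Set.Ioc_subset_Ioi_self.eventuallyLE)
    linarith
  -- choose a good sequence
  have hseq : ∀ n : ℕ, ∃ y : ℝ, (n:ℝ) < y ∧ f y < 1/((n:ℝ)+1) := by
    intro n
    by_contra h
    push_neg at h
    have hmono : IntegrableOn f (Set.Ioi (n:ℝ)) :=
      hf.mono_set (Set.Ioi_subset_Ioi (by positivity))
    have hconst : IntegrableOn (fun _ : ℝ => 1/((n:ℝ)+1)) (Set.Ioi (n:ℝ)) := by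
      refine hmono.mono' aestronglyMeasurable_const ?_
      refine (ae_restrict_iff' measurableSet_Ioi).2 (Filter.Eventually.of_forall ?_)
      intro y hy
      have : (0:ℝ) < 1/((n:ℝ)+1) := by positivity
      rw [Real.norm_eq_abs, abs_of_pos this]
      exact h y hy
    rw [integrableOn_const_iff] at hconst
    rcases hconst with h1 | h2
    · have : (0:ℝ) < 1/((n:ℝ)+1) := by positivity
      rw [enorm_eq_zero] at h1; linarith
    · simp [Real.volume_Ioi] at h2
  choose b hb1 hb2 using hseq
  have hbpos : ∀ n, 0 < b n := fun n => lt_of_le_of_lt (Nat.cast_nonneg n) (hb1 n)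
  have hbtop : Tendsto b atTop atTop :=
    tendsto_atTop_mono (fun n => (hb1 n).le) tendsto_natCast_atTop_atTop
  have hFnn : ∀ n, 0 ≤ F (b n) := by
    intro n
    have := (hbpos n).le
    simp only [hFdef]
    positivity
  have hFub : ∀ n : ℕ, 1 ≤ n → F (b n) ≤ 1/(c*n) := by
    intro n hn
    have hn' : (0:ℝ) < n := by exact_mod_cast hn
    have h1 : F (b n) * (c * b n) = f (b n) := by
      simp only [hFdef, hfdef]; ring
    have h2 : F (b n) * (c * n) ≤ F (b n) * (c * b n) := by
      apply mul_le_mul_of_nonneg_left _ (hFnn n)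
      exact mul_le_mul_of_nonneg_left (hb1 n).le hc.le
    have h3 : f (b n) < 1/((n:ℝ)+1) := hb2 n
    have h4 : (1:ℝ)/((n:ℝ)+1) ≤ 1 := by
      rw [div_le_one (by positivity)]; linarith
    have hcn : 0 < c * n := by positivity
    rw [le_div_iff₀ hcn]
    linarith
  have hFlim : Tendsto (fun n => F (b n)) atTop (nhds 0) := by
    apply squeeze_zero' (Filter.Eventually.of_forall hFnn)
      (Filter.eventually_atTop.2 ⟨1, hFub⟩)
    have h1 : Tendsto (fun n : ℕ => (1:ℝ)/(n:ℝ)) atTop (nhds 0) :=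
      tendsto_one_div_atTop_nhds_zero_nat
    have h2 : Tendsto (fun n : ℕ => (1/c) * (1/(n:ℝ))) atTop (nhds ((1/c) * 0)) :=
      h1.const_mul _
    simp only [mul_zero] at h2
    convert h2 using 2 with n
    field_simp
  have hlim : Tendsto (fun n => ∫ y in (0:ℝ)..(b n), f y) atTop
      (nhds (∫ y in Set.Ioi 0, f y)) :=
    intervalIntegral_tendsto_integral_Ioi 0 hf hbtop
  have hlim2 : Tendsto (fun n => F (b n) + ∫ y in Set.Ioi 0, g y) atTop
      (nhds (0 + ∫ y in Set.Ioi 0, g y)) := hFlim.add tendsto_const_nhds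
  rw [zero_add] at hlim2
  exact le_of_tendsto_of_tendsto' hlim hlim2 (fun n => key2 (b n) (hbpos n).le)

/-- Weighted Hardy-type inequality with Gaussian weight `e^{2Ψ}`, `Ψ(y) = y²/(16 θ^E)`:
`∫ |∂_y Ψ|² |u|² e^{2Ψ} ≤ C ∫ |∂_y u|² e^{2Ψ}` over the half-plane, with `C = C(θ^E)`. -/
theorem stmt1 (θE : ℝ) (hθE : 0 < θE) :
    ∃ C > (0:ℝ), ∀ u : ℝ × ℝ → ℝ, ContDiff ℝ (⊤ : ℕ∞) u →
      (∀ x : ℝ, Filter.Tendsto (fun y : ℝ => u (x, y) * Real.exp (y ^ 2 / (16 * θE)))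
        Filter.atTop (nhds 0)) →
      IntegrableOn
        (fun p : ℝ × ℝ => (p.2 / (8 * θE)) ^ 2 * (u p) ^ 2
          * Real.exp (2 * (p.2 ^ 2 / (16 * θE)))) {p : ℝ × ℝ | 0 < p.2} →
      IntegrableOn
        (fun p : ℝ × ℝ => (fderiv ℝ u p (0, 1)) ^ 2
          * Real.exp (2 * (p.2 ^ 2 / (16 * θE)))) {p : ℝ × ℝ | 0 < p.2} →
      (∫ p in {p : ℝ × ℝ | 0 < p.2},
          (p.2 / (8 * θE)) ^ 2 * (u p) ^ 2 * Real.exp (2 * (p.2 ^ 2 / (16 * θE))))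
        ≤ C * ∫ p in {p : ℝ × ℝ | 0 < p.2},
            (fderiv ℝ u p (0, 1)) ^ 2 * Real.exp (2 * (p.2 ^ 2 / (16 * θE))) := by
  refine ⟨1, one_pos, ?_⟩
  intro u hu _hdecay hfint hgint
  rw [one_mul]
  set c : ℝ := 1/(8*θE) with hcdef
  have hc : 0 < c := by positivity
  set FF : ℝ × ℝ → ℝ := fun p =>
    (p.2 / (8 * θE)) ^ 2 * (u p) ^ 2 * Real.exp (2 * (p.2 ^ 2 / (16 * θE))) with hFFdef
  set GG : ℝ × ℝ → ℝ := fun p =>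
    (fderiv ℝ u p (0, 1)) ^ 2 * Real.exp (2 * (p.2 ^ 2 / (16 * θE))) with hGGdef
  -- rewrite the set as a product and the measure
  have hS : {p : ℝ × ℝ | 0 < p.2} = (Set.univ : Set ℝ) ×ˢ Set.Ioi (0:ℝ) := by
    ext ⟨x, y⟩; simp
  have hprod : (volume : Measure (ℝ × ℝ)).restrict {p : ℝ × ℝ | 0 < p.2}
      = (volume : Measure ℝ).prod (volume.restrict (Set.Ioi 0)) := by
    rw [hS, Measure.volume_eq_prod, ← Measure.prod_restrict, Measure.restrict_univ]
  have hfint' : Integrable FF ((volume : Measure ℝ).prod (volume.restrict (Set.Ioi 0))) := by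
    rw [← hprod]; exact hfint
  have hgint' : Integrable GG ((volume : Measure ℝ).prod (volume.restrict (Set.Ioi 0))) := by
    rw [← hprod]; exact hgint
  have hL : ∫ p in {p : ℝ × ℝ | 0 < p.2}, FF p
      = ∫ x : ℝ, ∫ y in Set.Ioi (0:ℝ), FF (x, y) := by
    rw [hprod]; exact integral_prod FF hfint'
  have hR : ∫ p in {p : ℝ × ℝ | 0 < p.2}, GG p
      = ∫ x : ℝ, ∫ y in Set.Ioi (0:ℝ), GG (x, y) := by
    rw [hprod]; exact integral_prod GG hgint'
  rw [hL, hR]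
  have hudiff : Differentiable ℝ u := hu.differentiable (by simp)
  -- per-slice facts
  have hder : ∀ x y : ℝ, deriv (fun y => u (x, y)) y = fderiv ℝ u (x, y) (0, 1) := by
    intro x y
    have h1 : HasDerivAt (fun y : ℝ => ((x, y) : ℝ × ℝ)) ((0:ℝ), (1:ℝ)) y :=
      (hasDerivAt_const y x).prodMk (hasDerivAt_id y)
    have h2 : HasFDerivAt u (fderiv ℝ u (x, y)) (x, y) := (hudiff (x, y)).hasFDerivAt
    exact (h2.comp_hasDerivAt y h1).deriv
  have harg : ∀ y : ℝ, 2 * (y ^ 2 / (16 * θE)) = c * y ^ 2 := by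
    intro y; rw [hcdef]; field_simp; ring
  have hcoef : ∀ y : ℝ, (y / (8 * θE)) ^ 2 = c ^ 2 * y ^ 2 := by
    intro y; rw [hcdef]; field_simp
  apply integral_mono_ae (hfint'.integral_prod_left) (hgint'.integral_prod_left)
  filter_upwards [hfint'.prod_right_ae, hgint'.prod_right_ae] with x hFx hGx
  set v : ℝ → ℝ := fun y => u (x, y) with hvdef
  have hvdiff : Differentiable ℝ v := by
    intro y
    exact DifferentiableAt.comp y (hudiff (x, y))
      ((differentiableAt_const x).prodMk differentiableAt_id)
  have hderc : Continuous (deriv v) := by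
    have h1 : Continuous fun y : ℝ => fderiv ℝ u (x, y) (0, 1) := by
      have h2 : Continuous (fderiv ℝ u) := hu.continuous_fderiv (by simp)
      exact (h2.comp (Continuous.prodMk_right x)).clm_apply continuous_const
    have : deriv v = fun y => fderiv ℝ u (x, y) (0, 1) := funext fun y => hder x y
    rw [this]; exact h1
  have heqF : (fun y => FF (x, y)) = fun y => c^2*y^2*(v y)^2*Real.exp (c*y^2) := by
    funext y; simp only [hFFdef, hvdef, harg y, hcoef y]
  have heqG : (fun y => GG (x, y)) = fun y => (deriv v y)^2*Real.exp (c*y^2) := by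
    funext y; simp only [hGGdef, hvdef, harg y, hder x y]
  rw [heqF] at hFx ⊢
  rw [heqG] at hGx ⊢
  exact oneD c hc v hvdiff hderc hFx hGx
end

section
/- Let (u, v, θ) be a smooth solution of the simplified compressible Prandtl system with boundary conditions u|_{y=0} = v|_{y=0} = 0 and ∂_y θ|_{y=0} = 0. Then the quantity S := ∂_y² θ satisfies the compatibility boundary condition [∂_y u · ∂_x θ − (θ + θ^E) ∂_y S]|_{y=0} = 0. -/
open Filter Topology

noncomputable def pd (w : ℝ × ℝ × ℝ) (F : ℝ × ℝ × ℝ → ℝ) : ℝ × ℝ × ℝ → ℝ :=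
  fun p => fderiv ℝ F p w

def e1 : ℝ × ℝ × ℝ := (1, 0, 0)
def e2 : ℝ × ℝ × ℝ := (0, 1, 0)
def e3 : ℝ × ℝ × ℝ := (0, 0, 1)

lemma pd_contDiff {F : ℝ × ℝ × ℝ → ℝ} (hF : ContDiff ℝ (⊤ : ℕ∞) F) (w : ℝ × ℝ × ℝ) :
    ContDiff ℝ (⊤ : ℕ∞) (pd w F) := by
  have h := hF.fderiv_right (m := (⊤ : ℕ∞)) (by simp)
  exact (ContinuousLinearMap.apply ℝ ℝ w).contDiff.comp h

lemma hasDerivAt_pd3 (F : ℝ × ℝ × ℝ → ℝ) (hF : ContDiff ℝ (⊤ : ℕ∞) F) (t x y : ℝ) :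
    HasDerivAt (fun y' => F (t, x, y')) (pd e3 F (t, x, y)) y := by
  have hline : HasDerivAt (fun y' : ℝ => ((t, x, y') : ℝ × ℝ × ℝ)) e3 y :=
    (hasDerivAt_const y t).prodMk ((hasDerivAt_const y x).prodMk (hasDerivAt_id y))
  exact ((hF.differentiable (by simp) (t, x, y)).hasFDerivAt).comp_hasDerivAt y hline

lemma hasDerivAt_pd1 (F : ℝ × ℝ × ℝ → ℝ) (hF : ContDiff ℝ (⊤ : ℕ∞) F) (t x y : ℝ) :
    HasDerivAt (fun s => F (s, x, y)) (pd e1 F (t, x, y)) t := by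
  have hline : HasDerivAt (fun s : ℝ => ((s, x, y) : ℝ × ℝ × ℝ)) e1 t :=
    (hasDerivAt_id t).prodMk ((hasDerivAt_const t x).prodMk (hasDerivAt_const t y))
  exact ((hF.differentiable (by simp) (t, x, y)).hasFDerivAt).comp_hasDerivAt t hline

lemma hasDerivAt_pd2 (F : ℝ × ℝ × ℝ → ℝ) (hF : ContDiff ℝ (⊤ : ℕ∞) F) (t x y : ℝ) :
    HasDerivAt (fun x' => F (t, x', y)) (pd e2 F (t, x, y)) x := by
  have hline : HasDerivAt (fun x' : ℝ => ((t, x', y) : ℝ × ℝ × ℝ)) e2 x :=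
    (hasDerivAt_const x t).prodMk ((hasDerivAt_id x).prodMk (hasDerivAt_const x y))
  exact ((hF.differentiable (by simp) (t, x, y)).hasFDerivAt).comp_hasDerivAt x hline

lemma pd_pd (F : ℝ × ℝ × ℝ → ℝ) (hF : ContDiff ℝ (⊤ : ℕ∞) F) (v w : ℝ × ℝ × ℝ) (p : ℝ × ℝ × ℝ) :
    pd v (pd w F) p = fderiv ℝ (fderiv ℝ F) p v w := by
  have h2 : Differentiable ℝ (fderiv ℝ F) :=
    (hF.fderiv_right (m := (⊤ : ℕ∞)) (by simp)).differentiable (by simp)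
  have hd : HasFDerivAt (pd w F)
      ((ContinuousLinearMap.apply ℝ ℝ w).comp (fderiv ℝ (fderiv ℝ F) p)) p :=
    (ContinuousLinearMap.apply ℝ ℝ w).hasFDerivAt.comp p (h2 p).hasFDerivAt
  show fderiv ℝ (pd w F) p v = _
  rw [hd.fderiv]
  rfl

lemma pd_symm (F : ℝ × ℝ × ℝ → ℝ) (hF : ContDiff ℝ (⊤ : ℕ∞) F) (v w : ℝ × ℝ × ℝ) (p : ℝ × ℝ × ℝ) :
    pd v (pd w F) p = pd w (pd v F) p := by
  rw [pd_pd F hF v w p, pd_pd F hF w v p]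
  have h2 : Differentiable ℝ (fderiv ℝ F) :=
    (hF.fderiv_right (m := (⊤ : ℕ∞)) (by simp)).differentiable (by simp)
  exact second_derivative_symmetric
    (fun y => ((hF.differentiable (by simp) y).hasFDerivAt)) (h2 p).hasFDerivAt v w

lemma aux_cont_zero (f : ℝ → ℝ) (hf : Continuous f) (h : ∀ y : ℝ, 0 < y → f y = 0) :
    f 0 = 0 := by
  have h1 : Tendsto (fun n : ℕ => f (1 / (n + 1))) atTop (𝓝 (f 0)) :=
    (hf.tendsto 0).comp tendsto_one_div_add_atTop_nhds_zero_nat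
  have h2 : (fun n : ℕ => f (1 / (n + 1))) = fun _ => (0 : ℝ) :=
    funext fun n => h _ (by positivity)
  rw [h2] at h1
  exact (tendsto_nhds_unique tendsto_const_nhds h1).symm

lemma aux_deriv_zero (f : ℝ → ℝ) (hf : ContDiff ℝ (⊤ : ℕ∞) f) (h : ∀ y : ℝ, 0 < y → f y = 0) :
    deriv f 0 = 0 := by
  apply aux_cont_zero (deriv f) (hf.continuous_deriv (by simp))
  intro y hy
  have hev : f =ᶠ[𝓝 y] fun _ => (0 : ℝ) :=
    Filter.eventuallyEq_of_mem (Ioi_mem_nhds hy) fun z hz => h z hz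
  rw [hev.deriv_eq]
  simp

/-- For a smooth solution of the simplified compressible Prandtl system with
`u|_{y=0} = v|_{y=0} = 0` and `∂_y θ|_{y=0} = 0`, the quantity `S = ∂_y² θ` satisfies the
compatibility boundary condition `[∂_y u ∂_x θ − (θ+θ^E) ∂_y S]|_{y=0} = 0`. -/
theorem stmt5 (θE : ℝ) (hθE : 0 < θE)
    (u v θ : ℝ → ℝ → ℝ → ℝ)
    (hu : ContDiff ℝ (⊤ : ℕ∞) fun p : ℝ × ℝ × ℝ => u p.1 p.2.1 p.2.2)
    (hv : ContDiff ℝ (⊤ : ℕ∞) fun p : ℝ × ℝ × ℝ => v p.1 p.2.1 p.2.2)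
    (hθ : ContDiff ℝ (⊤ : ℕ∞) fun p : ℝ × ℝ × ℝ => θ p.1 p.2.1 p.2.2)
    (heq1 : ∀ t x y : ℝ, 0 < y →
      deriv (fun s => u s x y) t + u t x y * deriv (fun x' => u t x' y) x
        + v t x y * deriv (fun y' => u t x y') y
      = (θ t x y + θE) * deriv (fun y' => deriv (fun y'' => u t x y'') y') y)
    (heq2 : ∀ t x y : ℝ, 0 < y →
      deriv (fun s => θ s x y) t + u t x y * deriv (fun x' => θ t x' y) x
        + v t x y * deriv (fun y' => θ t x y') y
      = (θ t x y + θE) * deriv (fun y' => deriv (fun y'' => θ t x y'') y') y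
        + (θ t x y + θE) * (deriv (fun y' => u t x y') y) ^ 2)
    (heq3 : ∀ t x y : ℝ, 0 < y →
      deriv (fun x' => u t x' y) x + deriv (fun y' => v t x y') y
      = deriv (fun y' => deriv (fun y'' => θ t x y'') y') y
        + (deriv (fun y' => u t x y') y) ^ 2)
    (hbcu : ∀ t x : ℝ, u t x 0 = 0)
    (hbcv : ∀ t x : ℝ, v t x 0 = 0)
    (hbcθ : ∀ t x : ℝ, deriv (fun y' => θ t x y') 0 = 0) :
    ∀ t x : ℝ,
      deriv (fun y' => u t x y') 0 * deriv (fun x' => θ t x' 0) x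
        - (θ t x 0 + θE)
            * deriv (fun y =>
                deriv (fun y' => deriv (fun y'' => θ t x y'') y') y) 0 = 0 := by
  clear heq3
  intro t x
  set U : ℝ × ℝ × ℝ → ℝ := fun p => u p.1 p.2.1 p.2.2 with hUdef
  set V : ℝ × ℝ × ℝ → ℝ := fun p => v p.1 p.2.1 p.2.2 with hVdef
  set Θ : ℝ × ℝ × ℝ → ℝ := fun p => θ p.1 p.2.1 p.2.2 with hΘdef
  -- deriv-to-pd rewriting lemmas
  have du1 : ∀ a b c : ℝ, deriv (fun s => u s b c) a = pd e1 U (a, b, c) :=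
    fun a b c => (hasDerivAt_pd1 U hu a b c).deriv
  have du2 : ∀ a b c : ℝ, deriv (fun x' => u a x' c) b = pd e2 U (a, b, c) :=
    fun a b c => (hasDerivAt_pd2 U hu a b c).deriv
  have du3 : ∀ a b c : ℝ, deriv (fun y' => u a b y') c = pd e3 U (a, b, c) :=
    fun a b c => (hasDerivAt_pd3 U hu a b c).deriv
  have dv3 : ∀ a b c : ℝ, deriv (fun y' => v a b y') c = pd e3 V (a, b, c) :=
    fun a b c => (hasDerivAt_pd3 V hv a b c).deriv
  have dθ1 : ∀ a b c : ℝ, deriv (fun s => θ s b c) a = pd e1 Θ (a, b, c) :=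
    fun a b c => (hasDerivAt_pd1 Θ hθ a b c).deriv
  have dθ2 : ∀ a b c : ℝ, deriv (fun x' => θ a x' c) b = pd e2 Θ (a, b, c) :=
    fun a b c => (hasDerivAt_pd2 Θ hθ a b c).deriv
  have dθ3 : ∀ a b c : ℝ, deriv (fun y' => θ a b y') c = pd e3 Θ (a, b, c) :=
    fun a b c => (hasDerivAt_pd3 Θ hθ a b c).deriv
  have du33 : ∀ a b c : ℝ, deriv (fun y' => pd e3 U (a, b, y')) c = pd e3 (pd e3 U) (a, b, c) :=
    fun a b c => (hasDerivAt_pd3 _ (pd_contDiff hu e3) a b c).deriv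
  have dθ33 : ∀ a b c : ℝ, deriv (fun y' => pd e3 Θ (a, b, y')) c = pd e3 (pd e3 Θ) (a, b, c) :=
    fun a b c => (hasDerivAt_pd3 _ (pd_contDiff hθ e3) a b c).deriv
  have dθ333 : ∀ a b c : ℝ, deriv (fun y' => pd e3 (pd e3 Θ) (a, b, y')) c
      = pd e3 (pd e3 (pd e3 Θ)) (a, b, c) :=
    fun a b c => (hasDerivAt_pd3 _ (pd_contDiff (pd_contDiff hθ e3) e3) a b c).deriv
  simp only [du1, du2, du3, dv3, dθ1, dθ2, dθ3, du33, dθ33, dθ333] at heq1 heq2 ⊢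
  -- boundary facts
  have b0 : ∀ a b : ℝ, pd e3 Θ (a, b, 0) = 0 := by
    intro a b; rw [← dθ3]; exact hbcθ a b
  have bu : u t x 0 = 0 := hbcu t x
  have bv : v t x 0 = 0 := hbcv t x
  have bθ1 : pd e1 (pd e3 Θ) (t, x, 0) = 0 := by
    have : (fun s => pd e3 Θ (s, x, 0)) = fun _ => (0 : ℝ) := funext fun s => b0 s x
    have hd := (hasDerivAt_pd1 (pd e3 Θ) (pd_contDiff hθ e3) t x 0).deriv
    rw [this] at hd; rw [← hd]; simp
  have bsym : pd e3 (pd e1 Θ) (t, x, 0) = 0 := by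
    rw [pd_symm Θ hθ e3 e1 (t, x, 0)]; exact bθ1
  have bu1 : pd e1 U (t, x, 0) = 0 := by
    have : (fun s => u s x 0) = fun _ => (0 : ℝ) := funext fun s => hbcu s x
    have hd := (hasDerivAt_pd1 U hu t x 0).deriv
    rw [show (fun s => U (s, x, 0)) = (fun s => u s x 0) from rfl, this] at hd
    rw [← hd]; simp
  -- smoothness of line composition
  have cline : ContDiff ℝ (⊤ : ℕ∞) (fun y : ℝ => ((t, x, y) : ℝ × ℝ × ℝ)) :=
    contDiff_const.prodMk (contDiff_const.prodMk contDiff_id)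
  have cU : ContDiff ℝ (⊤ : ℕ∞) (fun y : ℝ => u t x y) := hu.comp cline
  have cV : ContDiff ℝ (⊤ : ℕ∞) (fun y : ℝ => v t x y) := hv.comp cline
  have cΘ : ContDiff ℝ (⊤ : ℕ∞) (fun y : ℝ => θ t x y) := hθ.comp cline
  -- heq1 extended to y = 0 : gives (θ + θE) * ∂_y² u = 0 at the boundary
  have bE1 : (θ t x 0 + θE) * pd e3 (pd e3 U) (t, x, 0) = 0 := by
    have hcont : Continuous (fun y : ℝ =>
        pd e1 U (t, x, y) + u t x y * pd e2 U (t, x, y)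
          + v t x y * pd e3 U (t, x, y)
          - (θ t x y + θE) * pd e3 (pd e3 U) (t, x, y)) := by
      apply Continuous.sub
      · exact ((((pd_contDiff hu e1).comp cline).add
          (cU.mul ((pd_contDiff hu e2).comp cline))).add
          (cV.mul ((pd_contDiff hu e3).comp cline))).continuous
      · exact ((cΘ.add contDiff_const).mul
          ((pd_contDiff (pd_contDiff hu e3) e3).comp cline)).continuous
    have h0 := aux_cont_zero _ hcont (fun y hy => sub_eq_zero_of_eq (heq1 t x y hy))
    rw [bu, bv, bu1] at h0
    linarith [h0]
  -- main computation: derivative of the θ-equation at y = 0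
  have h1 := hasDerivAt_pd3 (pd e1 Θ) (pd_contDiff hθ e1) t x 0
  have h2 := hasDerivAt_pd3 U hu t x 0
  have h3 := hasDerivAt_pd3 (pd e2 Θ) (pd_contDiff hθ e2) t x 0
  have h4 := hasDerivAt_pd3 (pd e3 Θ) (pd_contDiff hθ e3) t x 0
  have h5 := hasDerivAt_pd3 V hv t x 0
  have h6 := hasDerivAt_pd3 Θ hθ t x 0
  have h7 := hasDerivAt_pd3 (pd e3 (pd e3 Θ)) (pd_contDiff (pd_contDiff hθ e3) e3) t x 0
  have h8 := hasDerivAt_pd3 (pd e3 U) (pd_contDiff hu e3) t x 0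
  have hG : HasDerivAt (fun y : ℝ =>
      pd e1 Θ (t, x, y) + u t x y * pd e2 Θ (t, x, y) + v t x y * pd e3 Θ (t, x, y)
        - ((θ t x y + θE) * pd e3 (pd e3 Θ) (t, x, y)
            + (θ t x y + θE) * (pd e3 U (t, x, y)) ^ 2))
      (pd e3 (pd e1 Θ) (t, x, 0)
        + (pd e3 U (t, x, 0) * pd e2 Θ (t, x, 0) + u t x 0 * pd e3 (pd e2 Θ) (t, x, 0))
        + (pd e3 V (t, x, 0) * pd e3 Θ (t, x, 0) + v t x 0 * pd e3 (pd e3 Θ) (t, x, 0))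
        - ((pd e3 Θ (t, x, 0) * pd e3 (pd e3 Θ) (t, x, 0)
              + (θ t x 0 + θE) * pd e3 (pd e3 (pd e3 Θ)) (t, x, 0))
            + (pd e3 Θ (t, x, 0) * (pd e3 U (t, x, 0)) ^ 2
              + (θ t x 0 + θE) * ((2 : ℕ) * (pd e3 U (t, x, 0)) ^ 1 * pd e3 (pd e3 U) (t, x, 0)))))
      0 :=
    ((h1.add (h2.mul h3)).add (h5.mul h4)).sub
      (((h6.add_const θE).mul h7).add ((h6.add_const θE).mul (h8.pow 2)))
  have hsmooth : ContDiff ℝ (⊤ : ℕ∞) (fun y : ℝ =>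
      pd e1 Θ (t, x, y) + u t x y * pd e2 Θ (t, x, y) + v t x y * pd e3 Θ (t, x, y)
        - ((θ t x y + θE) * pd e3 (pd e3 Θ) (t, x, y)
            + (θ t x y + θE) * (pd e3 U (t, x, y)) ^ 2)) := by
    apply ContDiff.sub
    · exact (((pd_contDiff hθ e1).comp cline).add
        (cU.mul ((pd_contDiff hθ e2).comp cline))).add
        (cV.mul ((pd_contDiff hθ e3).comp cline))
    · exact ((cΘ.add contDiff_const).mul
        ((pd_contDiff (pd_contDiff hθ e3) e3).comp cline)).add
        ((cΘ.add contDiff_const).mul (((pd_contDiff hu e3).comp cline).pow 2))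
  have hzero := aux_deriv_zero _ hsmooth (fun y hy => sub_eq_zero_of_eq (heq2 t x y hy))
  have hD0 := hG.deriv
  rw [hzero] at hD0
  rw [bu, bv, bsym, b0 t x] at hD0
  linear_combination (-1 : ℝ) * hD0 + 2 * pd e3 U (t, x, 0) * bE1
end
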